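/- Existence and uniqueness of the effective affinity and stalling state (Theorems 'unitary' and 'characterization'): Assume in addition that the kernel of W_hid, viewed as a linear map ℝ^n → ℝ^n via v ↦ W_hid *ᵥ v, is one-dimensional, and that Q ≠ 0. Then for every real number q ≠ 0 and every function p' : Fin n → ℝ with p' i > 0 for all i and ∑ i, p' i = 1, the matrix (Matrix.diagonal p') * (M q)ᵀ * (Matrix.diagonal p')⁻¹ is a Markov jump-process generator (all off-diagonal entries nonnegative and every column summing to zero) if and only if q = Q and p' = p. -/

import Mathlib

open Matrix

/-!
Conjugation by `diagonal p'` turns the column sums of `diagonal p' * (M q)ᵀ * (diagonal p')⁻¹`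
into the entries of `M q *ᵥ p'` divided by `p'`, and its off-diagonal entries are always
nonnegative; so it is a generator iff `M q *ᵥ p' = 0`. Since `M q` differs from `Whid` only on
the block `{a, b} × {a, b}`,
`M q *ᵥ p' = Whid *ᵥ p' + Δₐ • eₐ + Δ_b • e_b` with `Δ_b = W b a * p' a * exp q - W a b * p' b`
and `Δₐ = -exp (-q) * Δ_b`. The columns of `Whid` sum to zero, so summing the entries of
`M q *ᵥ p' = 0` gives `(1 - exp (-q)) * Δ_b = 0`. For `q ≠ 0` both `Δ`s vanish, `p'` lies in the
one-dimensional kernel of `Whid` and the normalisation forces `p' = p`; then `Δ_b = 0` reads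
`exp q = W a b * p b / (W b a * p a)`. Conversely, at `q = Q` and `p' = p` both `Δ`s vanish.
-/

def IsMarkovGenerator {ι : Type*} [Fintype ι] (G : Matrix ι ι ℝ) : Prop :=
  (∀ i j, i ≠ j → 0 ≤ G i j) ∧ ∀ j, ∑ i, G i j = 0

section

variable {ι K : Type*} [Fintype ι] [Field K]

theorem diagonal_mul_transpose_mul_diagonal_inv_apply [DecidableEq ι] {d : ι → K}
    (hd : ∀ i, d i ≠ 0) (A : Matrix ι ι K) (i j : ι) :
    (diagonal d * Aᵀ * (diagonal d)⁻¹) i j = d i * A j i / d j := by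
  have hinv : (diagonal d)⁻¹ = diagonal fun i => (d i)⁻¹ :=
    inv_eq_right_inv (by simp [diagonal_mul_diagonal, hd])
  rw [hinv, mul_diagonal, diagonal_mul, transpose_apply, div_eq_mul_inv]

theorem sum_diagonal_mul_transpose_mul_diagonal_inv_apply [DecidableEq ι] {d : ι → K}
    (hd : ∀ i, d i ≠ 0) (A : Matrix ι ι K) (j : ι) :
    ∑ i, (diagonal d * Aᵀ * (diagonal d)⁻¹) i j = (A *ᵥ d) j / d j := by
  simp only [diagonal_mul_transpose_mul_diagonal_inv_apply hd, mulVec, dotProduct,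
    Finset.sum_div, mul_comm (d _)]

theorem sum_mulVec_eq_zero {A : Matrix ι ι K} (hA : ∀ j, ∑ i, A i j = 0) (v : ι → K) :
    ∑ i, (A *ᵥ v) i = 0 := by
  simp only [mulVec, dotProduct]
  rw [Finset.sum_comm]
  simp [← Finset.sum_mul, hA]

theorem mulVec_sub_mulVec_of_eq_off_pair [DecidableEq ι] {A B : Matrix ι ι K} {a b : ι}
    (hab : a ≠ b) (hAB : ∀ i j, (i ≠ a ∧ i ≠ b) ∨ (j ≠ a ∧ j ≠ b) → A i j = B i j) (v : ι → K) :
    A *ᵥ v - B *ᵥ v =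
      Pi.single a ((A a a - B a a) * v a + (A a b - B a b) * v b) +
        Pi.single b ((A b a - B b a) * v a + (A b b - B b b) * v b) := by
  ext j
  have hrow : (A *ᵥ v - B *ᵥ v) j = ∑ i, (A j i - B j i) * v i := by
    simp only [Pi.sub_apply, mulVec, dotProduct, ← Finset.sum_sub_distrib, sub_mul]
  have hoff : ∀ i, i ≠ a ∧ i ≠ b → (A j i - B j i) * v i = 0 := fun i hi => by
    rw [hAB j i (Or.inr hi), sub_self, zero_mul]
  rw [hrow, Pi.add_apply]
  by_cases hja : j = a
  · subst hja
    simp [Fintype.sum_eq_add j b hab hoff, hab]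
  by_cases hjb : j = b
  · subst hjb
    simp [Fintype.sum_eq_add a j hab hoff, hja]
  · simp only [Pi.single_apply, hja, hjb, if_false, add_zero]
    exact Finset.sum_eq_zero fun i _ => by rw [hAB j i (Or.inl ⟨hja, hjb⟩), sub_self, zero_mul]

theorem eq_of_mem_ker_of_finrank_ker_eq_one {V : Type*} [AddCommGroup V] [Module K V]
    {f : (ι → K) →ₗ[K] V} (hf : Module.finrank K (LinearMap.ker f) = 1) {p p' : ι → K}
    (hp : f p = 0) (hp' : f p' = 0) (hsum : ∑ i, p i = 1) (hsum' : ∑ i, p' i = 1) :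
    p' = p := by
  have hp0 : p ≠ 0 := by rintro rfl; simp at hsum
  have hspan : Submodule.span K {p} = LinearMap.ker f :=
    Submodule.eq_of_le_of_finrank_eq (by simpa [Submodule.span_le] using hp)
      (by rw [hf, finrank_span_singleton hp0])
  obtain ⟨t, rfl⟩ := Submodule.mem_span_singleton.mp (hspan ▸ hp' : p' ∈ Submodule.span K {p})
  have ht : t = 1 := by simpa [← Finset.mul_sum, hsum] using hsum'
  rw [ht, one_smul]

end

theorem isMarkovGenerator_diagonal_mul_transpose_mul_diagonal_inv_iff {ι : Type*} [Fintype ι]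
    [DecidableEq ι] {A : Matrix ι ι ℝ} (hA : ∀ i j, i ≠ j → 0 ≤ A i j) {d : ι → ℝ}
    (hd : ∀ i, 0 < d i) :
    IsMarkovGenerator (diagonal d * Aᵀ * (diagonal d)⁻¹) ↔ A *ᵥ d = 0 := by
  have hd0 : ∀ i, d i ≠ 0 := fun i => (hd i).ne'
  have hoff : ∀ i j, i ≠ j → 0 ≤ (diagonal d * Aᵀ * (diagonal d)⁻¹) i j := fun i j hij => by
    rw [diagonal_mul_transpose_mul_diagonal_inv_apply hd0]
    exact div_nonneg (mul_nonneg (hd i).le (hA j i hij.symm)) (hd j).le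
  rw [IsMarkovGenerator, and_iff_right hoff, funext_iff]
  refine forall_congr' fun j => ?_
  rw [sum_diagonal_mul_transpose_mul_diagonal_inv_apply hd0, div_eq_zero_iff,
    or_iff_left (hd0 j), Pi.zero_apply]

theorem mul_exp_sub_eq_zero_iff {x y q : ℝ} (hx : 0 < x) (hy : 0 < y) :
    y * Real.exp q - x = 0 ↔ q = Real.log (x / y) := by
  rw [sub_eq_zero, mul_comm, ← eq_div_iff hy.ne']
  constructor
  · intro h; rw [← h, Real.log_exp]
  · rintro rfl; exact Real.exp_log (div_pos hx hy)

theorem mul_exp_neg_sub_eq {x y q : ℝ} :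
    x * Real.exp (-q) - y = -Real.exp (-q) * (y * Real.exp q - x) := by
  rw [Real.exp_neg]
  field_simp
  ring

theorem mul_exp_sub_eq_zero_of_add_eq_zero {x y q : ℝ} (hq : q ≠ 0)
    (h : x * Real.exp (-q) - y + (y * Real.exp q - x) = 0) : y * Real.exp q - x = 0 := by
  have hexp : Real.exp (-q) ≠ 1 := by simpa using hq
  rw [mul_exp_neg_sub_eq] at h
  have hfactor : (1 - Real.exp (-q)) * (y * Real.exp q - x) = 0 := by linear_combination h
  exact (mul_eq_zero.mp hfactor).resolve_left (sub_ne_zero.mpr hexp.symm)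

section

variable {ι : Type*} {W Whid : Matrix ι ι ℝ} {a b : ι}

theorem hidden_eq_of_off_pair
    (hH : ∀ i j, ¬(i = a ∧ j = b) → ¬(i = b ∧ j = a) → ¬(i = a ∧ j = a) →
      ¬(i = b ∧ j = b) → Whid i j = W i j)
    (i j : ι) (hij : (i ≠ a ∧ i ≠ b) ∨ (j ≠ a ∧ j ≠ b)) : Whid i j = W i j := by
  apply hH <;> tauto

theorem tilted_offDiag_nonneg {M : Matrix ι ι ℝ} {q : ℝ} (hW : ∀ i j, i ≠ j → 0 ≤ W i j)
    (hWab : 0 < W a b) (hWba : 0 < W b a)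
    (hM1 : M a b = W a b * Real.exp (-q)) (hM2 : M b a = W b a * Real.exp q)
    (hM3 : ∀ i j, ¬(i = a ∧ j = b) → ¬(i = b ∧ j = a) → M i j = W i j)
    (i j : ι) (hij : i ≠ j) : 0 ≤ M i j := by
  by_cases hab' : i = a ∧ j = b
  · rw [hab'.1, hab'.2, hM1]; positivity
  by_cases hba' : i = b ∧ j = a
  · rw [hba'.1, hba'.2, hM2]; positivity
  rw [hM3 i j hab' hba']
  exact hW i j hij

variable [Fintype ι] [DecidableEq ι]

theorem sum_hidden_col_eq_zero (hW : ∀ j, ∑ i, W i j = 0) (hab : a ≠ b)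
    (hH1 : Whid a b = 0) (hH2 : Whid b a = 0)
    (hH3 : Whid a a = W a a + W b a) (hH4 : Whid b b = W b b + W a b)
    (hH5 : ∀ i j, ¬(i = a ∧ j = b) → ¬(i = b ∧ j = a) → ¬(i = a ∧ j = a) →
      ¬(i = b ∧ j = b) → Whid i j = W i j) (j : ι) :
    ∑ i, Whid i j = 0 := by
  have hcol : ∀ A : Matrix ι ι ℝ, ∑ i, A i j = (Aᵀ *ᵥ 1) j := fun A => by
    simp [mulVec, dotProduct]
  have hdiff := mulVec_sub_mulVec_of_eq_off_pair (A := Wᵀ) (B := Whidᵀ) hab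
    (fun i j hij => (hidden_eq_of_off_pair hH5 j i hij.symm).symm) 1
  simp only [transpose_apply, hH1, hH2, hH3, hH4, Pi.one_apply] at hdiff
  have hsame : Whidᵀ *ᵥ 1 = Wᵀ *ᵥ 1 := by
    rw [← sub_eq_zero, ← neg_sub, hdiff]; simp
  rw [hcol, hsame, ← hcol, hW]

theorem tilted_mulVec_eq {M : Matrix ι ι ℝ} {q : ℝ} (hab : a ≠ b)
    (hH1 : Whid a b = 0) (hH2 : Whid b a = 0)
    (hH3 : Whid a a = W a a + W b a) (hH4 : Whid b b = W b b + W a b)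
    (hH5 : ∀ i j, ¬(i = a ∧ j = b) → ¬(i = b ∧ j = a) → ¬(i = a ∧ j = a) →
      ¬(i = b ∧ j = b) → Whid i j = W i j)
    (hM1 : M a b = W a b * Real.exp (-q)) (hM2 : M b a = W b a * Real.exp q)
    (hM3 : ∀ i j, ¬(i = a ∧ j = b) → ¬(i = b ∧ j = a) → M i j = W i j) (v : ι → ℝ) :
    M *ᵥ v = Whid *ᵥ v + Pi.single a (W a b * v b * Real.exp (-q) - W b a * v a) +
      Pi.single b (W b a * v a * Real.exp q - W a b * v b) := by
  have hoff : ∀ i j, (i ≠ a ∧ i ≠ b) ∨ (j ≠ a ∧ j ≠ b) → M i j = Whid i j := fun i j hij => by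
    rw [hidden_eq_of_off_pair hH5 i j hij, hM3] <;> tauto
  have hdiff := mulVec_sub_mulVec_of_eq_off_pair hab hoff v
  rw [hM1, hM2, hM3 a a (by tauto) (by tauto), hM3 b b (by tauto) (by tauto), hH1, hH2, hH3,
    hH4] at hdiff
  rw [add_assoc, ← sub_eq_iff_eq_add', hdiff]
  congr 2 <;> ring

end

theorem effective_affinity_unique {n : ℕ}
    (W Whid : Matrix (Fin n) (Fin n) ℝ)
    (hW1 : ∀ i j, i ≠ j → 0 ≤ W i j)
    (hW2 : ∀ j, ∑ i, W i j = 0)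
    (a b : Fin n) (hab : a ≠ b)
    (hWab : 0 < W a b) (hWba : 0 < W b a)
    (hH1 : Whid a b = 0) (hH2 : Whid b a = 0)
    (hH3 : Whid a a = W a a + W b a)
    (hH4 : Whid b b = W b b + W a b)
    (hH5 : ∀ i j, ¬(i = a ∧ j = b) → ¬(i = b ∧ j = a) → ¬(i = a ∧ j = a) →
      ¬(i = b ∧ j = b) → Whid i j = W i j)
    (p : Fin n → ℝ) (hp1 : ∀ i, 0 < p i) (hp2 : ∑ i, p i = 1)
    (hp3 : Whid *ᵥ p = 0)
    (M : ℝ → Matrix (Fin n) (Fin n) ℝ)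
    (hM1 : ∀ q, M q a b = W a b * Real.exp (-q))
    (hM2 : ∀ q, M q b a = W b a * Real.exp q)
    (hM3 : ∀ q i j, ¬(i = a ∧ j = b) → ¬(i = b ∧ j = a) → M q i j = W i j)
    (hker : Module.finrank ℝ (LinearMap.ker Whid.mulVecLin) = 1) :
    ∀ q : ℝ, q ≠ 0 → ∀ p' : Fin n → ℝ, (∀ i, 0 < p' i) → (∑ i, p' i = 1) →
      (((∀ i j, i ≠ j →
          0 ≤ (Matrix.diagonal p' * (M q)ᵀ * (Matrix.diagonal p')⁻¹) i j) ∧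
        (∀ j, ∑ i, (Matrix.diagonal p' * (M q)ᵀ * (Matrix.diagonal p')⁻¹) i j = 0))
        ↔ (q = Real.log (W a b * p b / (W b a * p a)) ∧ p' = p)) := by
  intro q hq p' hp'1 hp'2
  have hflux := mul_exp_sub_eq_zero_iff (q := q) (mul_pos hWab (hp1 b)) (mul_pos hWba (hp1 a))
  change IsMarkovGenerator _ ↔ _
  rw [isMarkovGenerator_diagonal_mul_transpose_mul_diagonal_inv_iff
    (tilted_offDiag_nonneg hW1 hWab hWba (hM1 q) (hM2 q) (hM3 q)) hp'1,
    tilted_mulVec_eq hab hH1 hH2 hH3 hH4 hH5 (hM1 q) (hM2 q) (hM3 q)]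
  constructor
  · intro h
    have hsum := congrArg (fun v => ∑ i, v i) h
    simp only [Pi.add_apply, Finset.sum_add_distrib, Finset.sum_pi_single', Finset.mem_univ,
      if_true, sum_mulVec_eq_zero (sum_hidden_col_eq_zero hW2 hab hH1 hH2 hH3 hH4 hH5),
      zero_add, Pi.zero_apply, Finset.sum_const_zero] at hsum
    have hb := mul_exp_sub_eq_zero_of_add_eq_zero hq hsum
    have ha : W a b * p' b * Real.exp (-q) - W b a * p' a = 0 := by
      rw [mul_exp_neg_sub_eq, hb, mul_zero]
    have hp' : Whid *ᵥ p' = 0 := by simpa [ha, hb] using h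
    obtain rfl := eq_of_mem_ker_of_finrank_ker_eq_one hker hp3 hp' hp2 hp'2
    exact ⟨hflux.1 hb, rfl⟩
  · rintro ⟨rfl, rfl⟩
    rw [hp3, mul_exp_neg_sub_eq, hflux.2 rfl]
    simp
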